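/- Let a group G admit an isometric, metrically proper action on a proper geodesic metric space (X,d) with the contracting property and with basepoint o. Then G contains a unique maximal finite normal subgroup E(G) (i.e. E(G) is a finite normal subgroup containing every finite normal subgroup of G), and moreover E(G) equals the intersection, over all contracting elements f ∈ G, of the subgroups E(f) = {g ∈ G : d_H(⟨f⟩·o, g·⟨f⟩·o) < ∞}, and also equals the intersection, over all contracting elements f ∈ G, of the subgroups E^+(f) = {g ∈ G : g f^m g^{-1} = f^m for some m > 0}. -/

import Mathlib

open Metric

/-- A geodesic parametrisation from `x` to `y`, with image `s`: an isometric embedding of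
the interval `[0, dist x y]` sending the endpoints to `x` and `y`. -/
def IsGeodesicFromTo {X : Type*} [MetricSpace X] (s : Set X) (x y : X) : Prop :=
  ∃ γ : ℝ → X,
    (∀ u ∈ Set.Icc (0 : ℝ) (dist x y), ∀ v ∈ Set.Icc (0 : ℝ) (dist x y),
      dist (γ u) (γ v) = |u - v|) ∧
    γ 0 = x ∧ γ (dist x y) = y ∧ s = γ '' Set.Icc (0 : ℝ) (dist x y)

/-- A geodesic segment: the image of an isometric embedding of a compact real interval. -/
def IsGeodesicSegment {X : Type*} [MetricSpace X] (s : Set X) : Prop :=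
  ∃ x y : X, IsGeodesicFromTo s x y

/-- A metric space is geodesic if any two points are joined by a geodesic segment. -/
def GeodesicSpace (X : Type*) [MetricSpace X] : Prop :=
  ∀ x y : X, ∃ s : Set X, IsGeodesicFromTo s x y

/-- Closest point projection of a point to a subset:
`π_Y(x) = {y ∈ closure Y | d(x,y) = d(x,Y)}`. -/
def projSet {X : Type*} [MetricSpace X] (Y : Set X) (x : X) : Set X :=
  {y ∈ closure Y | dist x y = Metric.infDist x Y}

/-- Closest point projection of a subset `B`: `π_Y(B) = ⋃_{x ∈ B} π_Y(x)`. -/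
def projSetOf {X : Type*} [MetricSpace X] (Y B : Set X) : Set X :=
  ⋃ x ∈ B, projSet Y x

/-- The closed `r`-neighbourhood `N_r(A) = {x | d(x,A) ≤ r}`. -/
def ptNbhd {X : Type*} [MetricSpace X] (r : ℝ) (A : Set X) : Set X :=
  {x | Metric.infDist x A ≤ r}

/-- `Y` is `C`-contracting : for every geodesic segment `s` with `d(s,Y) ≥ C`,
one has `diam (π_Y(s)) ≤ C`. -/
def IsContractingWith {X : Type*} [MetricSpace X] (C : ℝ) (Y : Set X) : Prop :=
  ∀ s : Set X, IsGeodesicSegment s → (∀ x ∈ s, C ≤ Metric.infDist x Y) →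
    ∀ p ∈ projSetOf Y s, ∀ q ∈ projSetOf Y s, dist p q ≤ C

/-- `Y` is contracting if it is `C`-contracting for some `C ≥ 0`. -/
def IsContractingSet {X : Type*} [MetricSpace X] (Y : Set X) : Prop :=
  ∃ C : ℝ, 0 ≤ C ∧ IsContractingWith C Y

/-- `Y` and `Z` have `R`-bounded intersection for some gauge function `R`:
`diam (N_r(Y) ∩ N_r(Z)) ≤ R r` for all `r ≥ 0`. -/
def HasBoundedIntersection {X : Type*} [MetricSpace X] (Y Z : Set X) : Prop :=
  ∃ R : ℝ → ℝ, ∀ r : ℝ, 0 ≤ r →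
    ∀ p ∈ ptNbhd r Y ∩ ptNbhd r Z, ∀ q ∈ ptNbhd r Y ∩ ptNbhd r Z, dist p q ≤ R r

/-- The orbit `⟨g⟩ · o` of the basepoint under the cyclic subgroup generated by `g`. -/
def cyclicOrbit {G X : Type*} [Group G] [MetricSpace X] [MulAction G X] (g : G) (o : X) :
    Set X :=
  Set.range fun n : ℤ => (g ^ n) • o

/-- `g` is a contracting element for the action: the orbit `⟨g⟩ · o` is a contracting
subset and `n ↦ gⁿ • o` is a quasi-isometric embedding of `ℤ`. -/
def IsContractingElement {G X : Type*} [Group G] [MetricSpace X] [MulAction G X]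
    (o : X) (g : G) : Prop :=
  IsContractingSet (cyclicOrbit g o) ∧
    ∃ K c : ℝ, 1 ≤ K ∧ 0 ≤ c ∧ ∀ m n : ℤ,
      |(m : ℝ) - (n : ℝ)| / K - c ≤ dist ((g ^ m) • o) ((g ^ n) • o) ∧
      dist ((g ^ m) • o) ((g ^ n) • o) ≤ K * |(m : ℝ) - (n : ℝ)| + c

/-- Two elements are weakly independent if their cyclic orbits have bounded intersection. -/
def WeaklyIndependent {G X : Type*} [Group G] [MetricSpace X] [MulAction G X]
    (o : X) (g h : G) : Prop :=
  HasBoundedIntersection (cyclicOrbit g o) (cyclicOrbit h o)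

/-- The action of `G` on `X` has the contracting property: there exist two weakly
independent contracting elements. -/
def ContractingProperty (G : Type*) (X : Type*) [Group G] [MetricSpace X] [MulAction G X]
    (o : X) : Prop :=
  ∃ g h : G, IsContractingElement o g ∧ IsContractingElement o h ∧ WeaklyIndependent o g h

/-- Stable translation length `ℓ_d(g) = lim_n d(o, gⁿ • o)/n`; by subadditivity (Fekete's
lemma) the limit exists and equals the infimum below. -/
noncomputable def stableLength {G X : Type*} [Group G] [MetricSpace X] [MulAction G X]
    (o : X) (g : G) : ℝ :=
  ⨅ n : ℕ+, dist o ((g ^ (n : ℕ)) • o) / ((n : ℕ) : ℝ)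

/-!
Let `E⁺` and `E` be the intersections of the subgroups `E⁺(f)` and `E(f)` over all contracting
`f`. Contracting elements are closed under conjugation (contraction survives finite Hausdorff
perturbations), so both are normal, and `E⁺ ≤ E` since commuting with `f ^ m` moves `⟨f⟩ • o`
a bounded distance. A finite normal subgroup is permuted by conjugation by `f`, so it commutes
with a power of `f` and lies in `E⁺`. It remains to see that `E` is finite: then `E ≤ E⁺`, and
`E⁺ = E` is the largest finite normal subgroup.

For `k ∈ E(f)`, the translate `k • ⟨f⟩ • o` is a contracting quasi-line at finite Hausdorff
distance from `⟨f⟩ • o`. Geodesics between far-apart points of it pass near `k • o` and, away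
from their ends, stay close to `⟨f⟩ • o`; hence `k • o` lies within a distance of `⟨f⟩ • o`
that depends only on the constants of `f`. For two weakly independent contracting elements this
puts `k • o` in a bounded set, and metric properness leaves finitely many such `k`.
-/

section

open Set
open scoped Pointwise

theorem ContinuousOn.exists_first_le {f : ℝ → ℝ} {a b L : ℝ} (hf : ContinuousOn f (Icc a b))
    (hab : a ≤ b) (ha : L ≤ f a) :
    ∃ v ∈ Icc a b, (v = b ∨ f v ≤ L) ∧ ∀ t ∈ Icc a v, L ≤ f t := by
  have hS : IsCompact (Icc a b ∩ f ⁻¹' Iic L ∪ {b}) :=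
    (isCompact_Icc.of_isClosed_subset (hf.preimage_isClosed_of_isClosed isClosed_Icc isClosed_Iic)
      inter_subset_left).union isCompact_singleton
  obtain ⟨v, hvS, hvmin⟩ := hS.exists_isLeast ⟨b, Or.inr rfl⟩
  have hv : v ∈ Icc a b :=
    hvS.elim (fun h => h.1) fun h => (mem_singleton_iff.1 h).symm ▸ right_mem_Icc.2 hab
  have hlt : ∀ t ∈ Ico a v, L < f t := fun t ht => by
    by_contra! h
    exact (hvmin (Or.inl ⟨⟨ht.1, ht.2.le.trans hv.2⟩, h⟩)).not_gt ht.2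
  refine ⟨v, hv, hvS.symm.imp id fun h => h.2, ?_⟩
  rcases hv.1.eq_or_lt with rfl | hav
  · intro t ht
    rw [Icc_self, mem_singleton_iff] at ht
    exact ht ▸ ha
  have hclosed : IsClosed (Icc a b ∩ f ⁻¹' Ici L) :=
    hf.preimage_isClosed_of_isClosed isClosed_Icc isClosed_Ici
  rw [← closure_Ico hav.ne]
  exact fun t ht => (hclosed.closure_subset_iff.2
    (fun s hs => ⟨⟨hs.1, hs.2.le.trans hv.2⟩, (hlt s hs).le⟩) ht).2

theorem ContinuousOn.exists_last_le {f : ℝ → ℝ} {a b L : ℝ} (hf : ContinuousOn f (Icc a b))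
    (hab : a ≤ b) (hb : L ≤ f b) :
    ∃ u ∈ Icc a b, (u = a ∨ f u ≤ L) ∧ ∀ t ∈ Icc u b, L ≤ f t := by
  have hf' : ContinuousOn (fun t => f (-t)) (Icc (-b) (-a)) :=
    hf.comp continuous_neg.continuousOn fun t ht => ⟨by linarith [ht.2], by linarith [ht.1]⟩
  obtain ⟨v, hv, hv_end, hv_far⟩ := hf'.exists_first_le (neg_le_neg hab) (by simpa using hb)
  refine ⟨-v, ⟨by linarith [hv.2], by linarith [hv.1]⟩, ?_, fun t ht => ?_⟩
  · exact hv_end.imp (fun h => by simp [h]) id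
  · simpa using hv_far (-t) ⟨by linarith [ht.2], by linarith [ht.1]⟩

variable {X : Type*} [MetricSpace X]

def IsGeodesicOn (γ : ℝ → X) (a b : ℝ) : Prop :=
  ∀ u ∈ Icc a b, ∀ v ∈ Icc a b, dist (γ u) (γ v) = |u - v|

theorem GeodesicSpace.exists_isGeodesicOn (hgeo : GeodesicSpace X) (x y : X) :
    ∃ γ : ℝ → X, IsGeodesicOn γ 0 (dist x y) ∧ γ 0 = x ∧ γ (dist x y) = y := by
  obtain ⟨-, γ, hγ, h0, h1, -⟩ := hgeo x y
  exact ⟨γ, hγ, h0, h1⟩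

namespace IsGeodesicOn

variable {γ : ℝ → X} {a b : ℝ}

theorem mono (hγ : IsGeodesicOn γ a b) {a' b' : ℝ} (ha : a ≤ a') (hb : b' ≤ b) :
    IsGeodesicOn γ a' b' := fun u hu v hv =>
  hγ u (Icc_subset_Icc ha hb hu) v (Icc_subset_Icc ha hb hv)

theorem dist_eq (hγ : IsGeodesicOn γ a b) {s t : ℝ} (hs : s ∈ Icc a b) (ht : t ∈ Icc a b)
    (hst : s ≤ t) : dist (γ s) (γ t) = t - s := by
  rw [hγ s hs t ht, abs_sub_comm, abs_of_nonneg (sub_nonneg.2 hst)]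

theorem isGeodesicSegment (hγ : IsGeodesicOn γ a b) (hab : a ≤ b) :
    IsGeodesicSegment (γ '' Icc a b) := by
  have hd : dist (γ a) (γ b) = b - a := hγ.dist_eq (left_mem_Icc.2 hab) (right_mem_Icc.2 hab) hab
  refine ⟨γ a, γ b, fun w => γ (a + w), fun u hu v hv => ?_, by simp, by simp [hd], ?_⟩
  · rw [hd] at hu hv
    rw [hγ _ ⟨by linarith [hu.1], by linarith [hu.2]⟩ _ ⟨by linarith [hv.1], by linarith [hv.2]⟩]
    ring_nf
  · rw [hd, ← image_image γ (a + ·), image_const_add_Icc]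
    ring_nf

theorem continuousOn_infDist (hγ : IsGeodesicOn γ a b) (Y : Set X) :
    ContinuousOn (fun t => infDist (γ t) Y) (Icc a b) := by
  have : LipschitzOnWith 1 γ (Icc a b) := LipschitzOnWith.of_dist_le_mul fun u hu v hv => by
    rw [hγ u hu v hv, Real.dist_eq]; simp
  exact (continuous_infDist_pt Y).comp_continuousOn this.continuousOn

end IsGeodesicOn

theorem projSet_nonempty [ProperSpace X] {Y : Set X} (hY : Y.Nonempty) (x : X) :
    (projSet Y x).Nonempty := by
  obtain ⟨y, hy, hd⟩ := exists_mem_closure_infDist_eq_dist hY x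
  exact ⟨y, hy, hd.symm⟩

namespace IsContractingWith

variable {C : ℝ} {Y : Set X} {γ : ℝ → X} {a b : ℝ}

theorem dist_le_of_isGeodesicOn (hcon : IsContractingWith C Y) (hγ : IsGeodesicOn γ a b)
    (hab : a ≤ b) (hfar : ∀ t ∈ Icc a b, C ≤ infDist (γ t) Y) {p q : X}
    (hp : p ∈ projSet Y (γ a)) (hq : q ∈ projSet Y (γ b)) : dist p q ≤ C :=
  hcon _ (hγ.isGeodesicSegment hab) (by rintro _ ⟨t, ht, rfl⟩; exact hfar t ht)
    p (mem_biUnion (mem_image_of_mem γ (left_mem_Icc.2 hab)) hp)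
    q (mem_biUnion (mem_image_of_mem γ (right_mem_Icc.2 hab)) hq)

theorem sub_le_of_isGeodesicOn [ProperSpace X] (hcon : IsContractingWith C Y) (hY : Y.Nonempty)
    (hγ : IsGeodesicOn γ a b) (hab : a ≤ b) (hfar : ∀ t ∈ Icc a b, C ≤ infDist (γ t) Y) :
    b - a ≤ infDist (γ a) Y + C + infDist (γ b) Y := by
  obtain ⟨p, hp⟩ := projSet_nonempty hY (γ a)
  obtain ⟨q, hq⟩ := projSet_nonempty hY (γ b)
  have hpq := hcon.dist_le_of_isGeodesicOn hγ hab hfar hp hq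
  rw [← hγ.dist_eq (left_mem_Icc.2 hab) (right_mem_Icc.2 hab) hab, ← hp.2, ← hq.2, dist_comm (γ b)]
  linarith [dist_triangle4 (γ a) p q (γ b)]

theorem infDist_le_or_near_endpoints [ProperSpace X] (hcon : IsContractingWith C Y) (hC : 0 ≤ C)
    (hY : Y.Nonempty) (hγ : IsGeodesicOn γ a b) {r : ℝ} (ha : infDist (γ a) Y ≤ r)
    (hb : infDist (γ b) Y ≤ r) {t : ℝ} (ht : t ∈ Icc a b) :
    infDist (γ t) Y ≤ 3 * C ∨ t - a ≤ r + 2 * C ∨ b - t ≤ r + 2 * C := by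
  by_contra! h
  have hf := hγ.continuousOn_infDist Y
  -- the maximal interval `[u, v] ∋ t` on which `γ` stays `C`-far from `Y`
  obtain ⟨u, hu, hu_end, hu_far⟩ :=
    (hf.mono (Icc_subset_Icc_right ht.2)).exists_last_le ht.1 (L := C) (by linarith)
  obtain ⟨v, hv, hv_end, hv_far⟩ :=
    (hf.mono (Icc_subset_Icc_left ht.1)).exists_first_le ht.2 (L := C) (by linarith)
  have hlen := hcon.sub_le_of_isGeodesicOn hY (hγ.mono hu.1 hv.2) (hu.2.trans hv.1)
    fun s hs => (le_total s t).elim (fun hst => hu_far s ⟨hs.1, hst⟩)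
      fun hts => hv_far s ⟨hts, hs.2⟩
  have hut : infDist (γ t) Y ≤ infDist (γ u) Y + (t - u) := by
    rw [← hγ.dist_eq ⟨hu.1, hu.2.trans ht.2⟩ ht hu.2, dist_comm]
    exact infDist_le_infDist_add_dist
  have htv : infDist (γ t) Y ≤ infDist (γ v) Y + (v - t) := by
    rw [← hγ.dist_eq ht ⟨ht.1.trans hv.1, hv.2⟩ hv.1]
    exact infDist_le_infDist_add_dist
  rcases hu_end with rfl | hu_end <;> rcases hv_end with rfl | hv_end <;> linarith

theorem infDist_le_of_isGeodesicOn [ProperSpace X] (hcon : IsContractingWith C Y) (hC : 0 ≤ C)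
    (hY : Y.Nonempty) (hγ : IsGeodesicOn γ a b) {r : ℝ} (ha : infDist (γ a) Y ≤ r)
    (hb : infDist (γ b) Y ≤ r) {t : ℝ} (ht : t ∈ Icc a b) : infDist (γ t) Y ≤ 2 * r + 3 * C := by
  have hr : 0 ≤ r := infDist_nonneg.trans ha
  have hat := hγ.dist_eq (left_mem_Icc.2 (ht.1.trans ht.2)) ht ht.1
  have htb := hγ.dist_eq ht (right_mem_Icc.2 (ht.1.trans ht.2)) ht.2
  rcases hcon.infDist_le_or_near_endpoints hC hY hγ ha hb ht with h | h | h
  · linarith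
  · linarith [infDist_le_infDist_add_dist (x := γ t) (y := γ a) (s := Y), dist_comm (γ t) (γ a)]
  · linarith [infDist_le_infDist_add_dist (x := γ t) (y := γ b) (s := Y)]

theorem dist_le_of_mem_projSet [ProperSpace X] (hgeo : GeodesicSpace X)
    (hcon : IsContractingWith C Y) (hY : Y.Nonempty) {x p w : X} (hx : C ≤ infDist x Y)
    (hp : p ∈ projSet Y x) (hw : infDist w Y ≤ C) :
    dist w p ≤ dist x w - infDist x Y + 3 * C := by
  obtain ⟨γ, hγ, hγ0, hγT⟩ := hgeo.exists_isGeodesicOn x w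
  have hT : (0 : ℝ) ≤ dist x w := dist_nonneg
  -- the first time `v` at which the geodesic from `x` to `w` comes `C`-close to `Y`
  obtain ⟨v, hv, hv_end, hv_far⟩ :=
    (hγ.continuousOn_infDist Y).exists_first_le hT (L := C) (by rwa [hγ0])
  have hfv : infDist (γ v) Y ≤ C := hv_end.elim (fun h => by rwa [h, hγT]) id
  obtain ⟨q, hq⟩ := projSet_nonempty hY (γ v)
  have hpq : dist p q ≤ C :=
    hcon.dist_le_of_isGeodesicOn (hγ.mono le_rfl hv.2) hv.1 hv_far (by rwa [hγ0]) hq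
  have h0v : infDist x Y ≤ infDist (γ v) Y + v := by
    have := hγ.dist_eq (left_mem_Icc.2 hT) hv hv.1
    rw [sub_zero, hγ0] at this
    linarith [infDist_le_infDist_add_dist (x := x) (y := γ v) (s := Y)]
  have hvw : dist (γ v) w = dist x w - v := by
    simpa only [hγT] using hγ.dist_eq hv (right_mem_Icc.2 hT) hv.2
  rw [dist_comm] at hvw hpq
  linarith [dist_triangle4 w (γ v) q p, hq.2]

theorem of_hausdorffEDist_ne_top [ProperSpace X] (hgeo : GeodesicSpace X)
    (hcon : IsContractingWith C Y) (hC : 0 ≤ C) (hY : Y.Nonempty) {Y' : Set X}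
    (hYY' : hausdorffEDist Y Y' ≠ ⊤) :
    IsContractingWith (7 * C + 6 * hausdorffDist Y Y') Y' := by
  set B := hausdorffDist Y Y'
  have hB : 0 ≤ B := hausdorffDist_nonneg
  have hY'Y : ∀ x, infDist x Y' ≤ infDist x Y + B := fun x =>
    infDist_le_infDist_add_hausdorffDist hYY'
  have hYY'' : ∀ x, infDist x Y ≤ infDist x Y' + B := fun x => by
    rw [hausdorffEDist_comm] at hYY'
    simpa [B, hausdorffDist_comm] using infDist_le_infDist_add_hausdorffDist (x := x) hYY'
  have hproj : ∀ x, C ≤ infDist x Y → ∀ p' ∈ projSet Y' x, ∀ p ∈ projSet Y x,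
      dist p' p ≤ 3 * C + 3 * B := by
    intro x hx p' hp' p hp
    obtain ⟨w, hw, hp'w⟩ := exists_mem_closure_infDist_eq_dist hY p'
    have hwp := hcon.dist_le_of_mem_projSet hgeo hY hx hp
      (by rw [infDist_zero_of_mem_closure hw]; exact hC)
    have hp'Y : infDist p' Y ≤ B := by
      simpa [infDist_zero_of_mem_closure hp'.1] using hYY'' p'
    linarith [dist_triangle p' w p, dist_triangle x p' w, hp'.2, hY'Y x]
  intro s hs hfar p hp q hq
  simp only [projSetOf, mem_iUnion₂] at hp hq
  obtain ⟨x, hx, hpx⟩ := hp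
  obtain ⟨y, hy, hqy⟩ := hq
  have hfarY : ∀ z ∈ s, C ≤ infDist z Y := fun z hz => by linarith [hfar z hz, hY'Y z]
  obtain ⟨px, hpx'⟩ := projSet_nonempty hY x
  obtain ⟨py, hpy'⟩ := projSet_nonempty hY y
  have hxy := hcon s hs hfarY px (mem_biUnion hx hpx') py (mem_biUnion hy hpy')
  linarith [dist_triangle4 p px py q, hproj x (hfarY x hx) p hpx px hpx',
    dist_comm q py ▸ hproj y (hfarY y hy) q hqy py hpy']

end IsContractingWith

section Isometry

variable {X' : Type*} [MetricSpace X']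

theorem projSet_image (Φ : X ≃ᵢ X') (Y : Set X) (x : X) :
    projSet (Φ '' Y) (Φ x) = Φ '' projSet Y x := by
  ext p'
  obtain ⟨p, rfl⟩ := Φ.surjective p'
  have hcl : closure (Φ '' Y) = Φ '' closure Y := (Φ.toHomeomorph.image_closure Y).symm
  simp only [projSet, mem_ofPred_eq, hcl, Φ.injective.mem_set_image, Φ.dist_eq,
    infDist_image Φ.isometry]

theorem IsGeodesicSegment.image {s : Set X} (hs : IsGeodesicSegment s) {Φ : X → X'}
    (hΦ : Isometry Φ) : IsGeodesicSegment (Φ '' s) := by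
  obtain ⟨x, y, γ, hγ, h0, h1, rfl⟩ := hs
  refine ⟨Φ x, Φ y, Φ ∘ γ, ?_, by simp [h0], by simp [hΦ.dist_eq, h1], by
    rw [hΦ.dist_eq, image_comp]⟩
  intro u hu v hv
  rw [hΦ.dist_eq] at hu hv
  simpa [hΦ.dist_eq] using hγ u hu v hv

theorem IsContractingWith.image {C : ℝ} {Y : Set X} (hcon : IsContractingWith C Y)
    (Φ : X ≃ᵢ X') : IsContractingWith C (Φ '' Y) := by
  have hback : ∀ s : Set X', ∀ p ∈ projSetOf (Φ '' Y) s, Φ.symm p ∈ projSetOf Y (Φ.symm '' s) := by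
    intro s p hp
    simp only [projSetOf, mem_iUnion₂] at hp ⊢
    obtain ⟨x, hx, hpx⟩ := hp
    rw [← Φ.apply_symm_apply x, projSet_image] at hpx
    obtain ⟨p, hp, rfl⟩ := hpx
    exact ⟨Φ.symm x, mem_image_of_mem _ hx, by rwa [Φ.symm_apply_apply]⟩
  intro s hs hfar p hp q hq
  rw [← Φ.symm.dist_eq]
  refine hcon _ (hs.image Φ.symm.isometry) ?_ _ (hback s p hp) _ (hback s q hq)
  rintro _ ⟨x, hx, rfl⟩
  rw [← infDist_image Φ.isometry, Φ.apply_symm_apply]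
  exact hfar x hx

end Isometry

theorem exists_abs_sub_le_of_abs_succ_sub_le {x : ℕ → ℝ} {J y : ℝ}
    (hstep : ∀ s, |x (s + 1) - x s| ≤ J) (h₀ : x 0 ≤ y) {S : ℕ} (hS : y ≤ x S) :
    ∃ s, |x s - y| ≤ J := by
  induction S with
  | zero =>
    refine ⟨0, ?_⟩
    rw [le_antisymm h₀ hS, sub_self, abs_zero]
    exact (abs_nonneg _).trans (hstep 0)
  | succ S ih =>
    by_cases hSy : y ≤ x S
    · exact ih hSy
    · refine ⟨S + 1, ?_⟩
      rw [abs_of_nonneg (sub_nonneg.2 hS)]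
      linarith [le_abs_self (x (S + 1) - x S), hstep S]

theorem IsGeodesicOn.exists_near_index {γ : ℝ → X} {T : ℝ} (hγ : IsGeodesicOn γ 0 T)
    (hT : 0 ≤ T) {z : ℤ → X} {K c δ : ℝ} (hK : 0 < K)
    (hlow : ∀ i j : ℤ, |(i : ℝ) - j| / K - c ≤ dist (z i) (z j))
    (hnear : ∀ t ∈ Icc 0 T, infDist (γ t) (range z) ≤ δ) {i₀ i₁ n : ℤ} (h₀ : γ 0 = z i₀)
    (h₁ : γ T = z i₁) (hn₀ : i₀ ≤ n) (hn₁ : n ≤ i₁) :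
    ∃ t ∈ Icc 0 T, ∃ j : ℤ, dist (z j) (γ t) ≤ δ + 1 ∧ |(j : ℝ) - n| ≤ K * (2 * δ + 3 + c) := by
  have hδ : 0 ≤ δ := infDist_nonneg.trans (hnear 0 (left_mem_Icc.2 hT))
  have hex : ∀ t ∈ Icc 0 T, ∃ j : ℤ, dist (z j) (γ t) < δ + 1 := fun t ht => by
    obtain ⟨_, ⟨j, rfl⟩, hj⟩ := (infDist_lt_iff (range_nonempty z)).1
      ((hnear t ht).trans_lt (lt_add_one δ))
    exact ⟨j, by rwa [dist_comm]⟩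
  choose! w hw using hex
  have hmem : ∀ s : ℕ, min (s : ℝ) T ∈ Icc 0 T := fun s =>
    ⟨le_min s.cast_nonneg hT, min_le_right _ _⟩
  -- indices along the walk `s ↦ γ (min s T)`, pinned to `i₀` and `i₁` at its two ends
  let j : ℕ → ℤ := fun s => if s = 0 then i₀ else if T ≤ s then i₁ else w s
  have hj : ∀ s : ℕ, dist (z (j s)) (γ (min (s : ℝ) T)) ≤ δ + 1 := by
    intro s
    dsimp only [j]
    split_ifs with hs0 hTs
    · simp [hs0, hT, h₀]; linarith
    · rw [min_eq_right hTs, h₁, dist_self]; linarith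
    · rw [min_eq_left (not_le.1 hTs).le]
      exact (hw s ⟨s.cast_nonneg, (not_le.1 hTs).le⟩).le
  have hstep : ∀ s : ℕ, |((j (s + 1) : ℤ) : ℝ) - j s| ≤ K * (2 * δ + 3 + c) := by
    intro s
    have hγs : dist (γ (min ((s + 1 : ℕ) : ℝ) T)) (γ (min (s : ℝ) T)) ≤ 1 := by
      rw [hγ _ (hmem _) _ (hmem _)]
      refine (abs_min_sub_min_le_max _ _ _ _).trans ?_
      simp
    have hd := dist_triangle4 (z (j (s + 1))) (γ (min ((s + 1 : ℕ) : ℝ) T)) (γ (min (s : ℝ) T))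
      (z (j s))
    rw [dist_comm (γ (min (s : ℝ) T))] at hd
    have := hlow (j (s + 1)) (j s)
    rw [← div_le_iff₀' hK]
    linarith [hj s, hj (s + 1)]
  set S := ⌈T⌉₊ + 1
  have hjS : j S = i₁ := by
    simp only [j, S, Nat.add_one_ne_zero, if_false]
    rw [if_pos (by push_cast; linarith [Nat.le_ceil T])]
  obtain ⟨s, hs⟩ := exists_abs_sub_le_of_abs_succ_sub_le (x := fun s => (j s : ℝ)) (y := n) hstep
    (by simpa [j] using hn₀) (S := S) (by rw [hjS]; exact_mod_cast hn₁)
  exact ⟨_, hmem s, j s, hj s, hs⟩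

theorem IsContractingWith.infDist_le_of_quasiLine [ProperSpace X] (hgeo : GeodesicSpace X)
    {C K c r : ℝ} {Y : Set X} (hconY : IsContractingWith C Y) (hC : 0 ≤ C) (hY : Y.Nonempty)
    (hK : 0 < K) {z : ℤ → X} (hlow : ∀ i j : ℤ, |(i : ℝ) - j| / K - c ≤ dist (z i) (z j))
    (hupp : ∀ i j : ℤ, dist (z i) (z j) ≤ K * |(i : ℝ) - j| + c)
    (hconZ : IsContractingWith C (range z)) (hzY : ∀ i, infDist (z i) Y ≤ r) (n : ℤ) :
    infDist (z n) Y ≤ 6 * C + 1 + K * (K * (6 * C + 3 + c)) + c := by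
  set D := K * (K * (6 * C + 3 + c)) + c + (3 * C + 1)
  obtain ⟨m, hm⟩ := exists_nat_gt (K * (r + 2 * C + D + c))
  have hfar : ∀ i : ℤ, |(i : ℝ) - n| = m → r + 2 * C + D < dist (z i) (z n) := by
    intro i hi
    have := hlow i n
    rw [hi] at this
    have : r + 2 * C + D + c < m / K := by rwa [lt_div_iff₀' hK]
    linarith
  -- a geodesic between the far-apart points `z (n ∓ m)` passes near `z n`, and away from its
  -- two ends it is `3 C`-close to `Y`
  obtain ⟨γ, hγ, hγ0, hγT⟩ := hgeo.exists_isGeodesicOn (z (n - m)) (z (n + m))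
  set T := dist (z (n - m)) (z (n + m))
  have hT : 0 ≤ T := dist_nonneg
  have h0 : (0 : ℝ) ∈ Icc 0 T := left_mem_Icc.2 hT
  have hT' : T ∈ Icc 0 T := right_mem_Icc.2 hT
  have hnearZ : ∀ t ∈ Icc 0 T, infDist (γ t) (range z) ≤ 3 * C := fun t ht => by
    have := hconZ.infDist_le_of_isGeodesicOn hC (range_nonempty z) hγ
      (by rw [hγ0, infDist_zero_of_mem (mem_range_self _)])
      (by rw [hγT, infDist_zero_of_mem (mem_range_self _)]) ht
    linarith
  obtain ⟨t, ht, j, hjt, hjn⟩ :=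
    hγ.exists_near_index hT hK hlow hnearZ hγ0 hγT (n := n) (by omega) (by omega)
  have hzn : dist (z n) (γ t) ≤ D := by
    rw [abs_sub_comm] at hjn
    calc dist (z n) (γ t) ≤ dist (z n) (z j) + dist (z j) (γ t) := dist_triangle _ _ _
      _ ≤ (K * |(n : ℝ) - j| + c) + (3 * C + 1) := add_le_add (hupp n j) hjt
      _ ≤ D := by linarith [mul_le_mul_of_nonneg_left hjn hK.le]
  rcases hconY.infDist_le_or_near_endpoints hC hY hγ (hγ0 ▸ hzY _) (hγT ▸ hzY _) ht with h | h | h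
  · linarith [infDist_le_infDist_add_dist (x := z n) (y := γ t) (s := Y)]
  · have := hfar (n - m) (by push_cast; simp)
    rw [← hγ0] at this
    linarith [dist_triangle (γ 0) (γ t) (z n), hγ.dist_eq h0 ht ht.1, dist_comm (z n) (γ t)]
  · have := hfar (n + m) (by push_cast; simp)
    rw [← hγT] at this
    linarith [dist_triangle (γ T) (γ t) (z n), hγ.dist_eq ht hT' ht.2, dist_comm (γ T) (γ t),
      dist_comm (z n) (γ t)]

section PowerCentralizer

variable {G : Type*} [Group G]

def powerCentralizer (f : G) : Subgroup G where
  carrier := {g | ∃ m : ℕ, 0 < m ∧ Commute g (f ^ m)}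
  one_mem' := ⟨1, one_pos, Commute.one_left _⟩
  mul_mem' := by
    rintro a b ⟨m, hm, ha⟩ ⟨n, hn, hb⟩
    refine ⟨m * n, Nat.mul_pos hm hn, ?_⟩
    rw [pow_mul]
    refine (ha.pow_right n).mul_left ?_
    rw [← pow_mul, mul_comm, pow_mul]
    exact hb.pow_right m
  inv_mem' := by
    rintro a ⟨m, hm, ha⟩
    exact ⟨m, hm, ha.inv_left⟩

theorem mem_powerCentralizer_iff {f g : G} :
    g ∈ powerCentralizer f ↔ ∃ m : ℕ, 0 < m ∧ g * f ^ m * g⁻¹ = f ^ m :=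
  exists_congr fun _ => and_congr_right fun _ => mul_inv_eq_iff_eq_mul.symm

theorem Subgroup.Normal.le_powerCentralizer {N : Subgroup G} (hN : N.Normal)
    (hfin : (N : Set G).Finite) (f : G) : N ≤ powerCentralizer f := by
  have : Finite N := hfin.to_subtype
  -- conjugation by `f` is an automorphism of the finite group `N`, so it has finite order
  intro n hn
  refine ⟨orderOf (MulAut.conjNormal (H := N) f), orderOf_pos _, ?_⟩
  have h := congr_arg (fun σ : MulAut N => (σ ⟨n, hn⟩ : G))
    (pow_orderOf_eq_one (MulAut.conjNormal (H := N) f))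
  rw [← map_pow] at h
  simp only [MulAut.conjNormal_apply, MulAut.one_apply] at h
  exact (mul_inv_eq_iff_eq_mul.1 h).symm

theorem Subgroup.normal_iInf_of_conj_mem {S : Set G} (H : G → Subgroup G)
    (hS : ∀ f ∈ S, ∀ a : G, a * f * a⁻¹ ∈ S)
    (hH : ∀ f g a : G, g ∈ H f → a * g * a⁻¹ ∈ H (a * f * a⁻¹)) : (⨅ f ∈ S, H f).Normal := by
  refine ⟨fun g hg a => ?_⟩
  simp only [Subgroup.mem_iInf] at hg ⊢
  intro f hf
  simpa [mul_assoc] using hH _ g a (hg _ (hS f hf a⁻¹))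

end PowerCentralizer

section Group

theorem conj_zpow_smul {G α : Type*} [Group G] [MulAction G α] (a f : G) (n : ℤ) (x : α) :
    (a * f * a⁻¹) ^ n • a • x = a • f ^ n • x := by
  rw [conj_zpow, mul_smul, mul_smul, inv_smul_smul]

variable {G : Type*} [Group G] [MulAction G X]

theorem cyclicOrbit_nonempty (f : G) (x : X) : (cyclicOrbit f x).Nonempty :=
  range_nonempty _

theorem cyclicOrbit_conj (a f : G) (x : X) :
    cyclicOrbit (a * f * a⁻¹) (a • x) = a • cyclicOrbit f x := by
  simp only [cyclicOrbit, conj_zpow_smul, smul_set_range]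

theorem smul_cyclicOrbit_of_commute {g f : G} (h : Commute g f) (x : X) :
    g • cyclicOrbit f x = cyclicOrbit f (g • x) := by
  simp only [cyclicOrbit, smul_set_range, smul_smul, ((h.zpow_right _).eq)]

variable [IsIsometricSMul G X]

theorem IsContractingWith.smul {C : ℝ} {Y : Set X} (hcon : IsContractingWith C Y) (g : G) :
    IsContractingWith C (g • Y) :=
  hcon.image (IsometryEquiv.constSMul g)

theorem hausdorffEDist_smul (g : G) (s t : Set X) :
    hausdorffEDist (g • s) (g • t) = hausdorffEDist s t :=
  hausdorffEDist_image (isometry_smul X g)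

theorem hausdorffEDist_ne_top_trans {s t u : Set X} (hst : hausdorffEDist s t ≠ ⊤)
    (htu : hausdorffEDist t u ≠ ⊤) : hausdorffEDist s u ≠ ⊤ :=
  ne_top_of_le_ne_top (ENNReal.add_ne_top.2 ⟨hst, htu⟩) hausdorffEDist_triangle

theorem hausdorffEDist_cyclicOrbit_le (f : G) (x y : X) :
    hausdorffEDist (cyclicOrbit f x) (cyclicOrbit f y) ≤ edist x y := by
  refine hausdorffEDist_le_of_mem_edist ?_ ?_ <;> rintro _ ⟨n, rfl⟩
  · exact ⟨_, mem_range_self n, (edist_smul_left _ _ _).le⟩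
  · exact ⟨_, mem_range_self n, by rw [edist_smul_left, edist_comm]⟩

theorem hausdorffEDist_cyclicOrbit_ne_top (f : G) (x y : X) :
    hausdorffEDist (cyclicOrbit f x) (cyclicOrbit f y) ≠ ⊤ :=
  ne_top_of_le_ne_top (edist_ne_top x y) (hausdorffEDist_cyclicOrbit_le f x y)

theorem hausdorffEDist_cyclicOrbit_pow_ne_top (f : G) (x : X) {m : ℕ} (hm : 0 < m) :
    hausdorffEDist (cyclicOrbit f x) (cyclicOrbit (f ^ m) x) ≠ ⊤ := by
  set r := (Finset.Ico (0 : ℤ) m).sup fun s => edist (f ^ s • x) x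
  have hr : r ≠ ⊤ := (Finset.sup_lt_iff bot_lt_top).2 (fun s _ => edist_lt_top _ _) |>.ne
  refine ne_top_of_le_ne_top hr (hausdorffEDist_le_of_mem_edist ?_ ?_)
  · -- `f ^ i • x = f ^ (m q) • f ^ s • x` with `0 ≤ s < m`
    rintro _ ⟨i, rfl⟩
    have hm' : (0 : ℤ) < m := by exact_mod_cast hm
    refine ⟨(f ^ m) ^ (i / m) • x, mem_range_self _, ?_⟩
    have hi : f ^ i = (f ^ m) ^ (i / m) * f ^ (i % m) := by
      rw [← zpow_natCast, ← zpow_mul, ← zpow_add, Int.mul_ediv_add_emod]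
    show edist (f ^ i • x) _ ≤ r
    rw [hi, mul_smul, edist_smul_left]
    exact Finset.le_sup (f := fun s => edist (f ^ s • x) x)
      (Finset.mem_Ico.2 ⟨Int.emod_nonneg i hm'.ne', Int.emod_lt_of_pos i hm'⟩)
  · rintro _ ⟨n, rfl⟩
    refine ⟨_, ⟨m * n, rfl⟩, ?_⟩
    simp [zpow_mul]

namespace IsContractingElement

variable {x : X} {f : G}

theorem smul (hf : IsContractingElement x f) (a : G) :
    IsContractingElement (a • x) (a * f * a⁻¹) := by
  obtain ⟨⟨C, hC, hcon⟩, K, c, hK, hc, hqi⟩ := hf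
  refine ⟨⟨C, hC, cyclicOrbit_conj a f x ▸ hcon.smul a⟩, K, c, hK, hc, fun m n => ?_⟩
  simpa only [conj_zpow_smul, dist_smul] using hqi m n

theorem of_basepoint [ProperSpace X] (hgeo : GeodesicSpace X) (hf : IsContractingElement x f)
    (y : X) : IsContractingElement y f := by
  obtain ⟨⟨C, hC, hcon⟩, K, c, hK, hc, hqi⟩ := hf
  refine ⟨⟨_, add_nonneg (by linarith) (mul_nonneg (by norm_num) hausdorffDist_nonneg),
    hcon.of_hausdorffEDist_ne_top hgeo hC (cyclicOrbit_nonempty f x)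
      (hausdorffEDist_cyclicOrbit_ne_top f x y)⟩, K, c + 2 * dist x y, hK, by positivity,
    fun m n => ?_⟩
  have h := dist_dist_dist_le (f ^ m • x) (f ^ n • x) (f ^ m • y) (f ^ n • y)
  rw [dist_smul, dist_smul, Real.dist_eq, abs_le] at h
  constructor <;> linarith [hqi m n]

theorem conj [ProperSpace X] (hgeo : GeodesicSpace X) (hf : IsContractingElement x f) (a : G) :
    IsContractingElement x (a * f * a⁻¹) := by
  simpa using (hf.of_basepoint hgeo (a⁻¹ • x)).smul a

end IsContractingElement

variable (G) in
def coarseStabilizer (Y : Set X) : Subgroup G where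
  carrier := {g | hausdorffEDist Y (g • Y) ≠ ⊤}
  one_mem' := by simp [hausdorffEDist_self]
  mul_mem' {a b} ha hb := by
    simp only [mem_ofPred_eq, mul_smul] at *
    exact hausdorffEDist_ne_top_trans ha (by rwa [hausdorffEDist_smul])
  inv_mem' {a} ha := by
    simp only [mem_ofPred_eq] at *
    rwa [← hausdorffEDist_smul a, smul_inv_smul, hausdorffEDist_comm]

theorem coarseStabilizer_congr {Y Y' : Set X} (h : hausdorffEDist Y Y' ≠ ⊤) :
    coarseStabilizer G Y = coarseStabilizer G Y' := by
  have key : ∀ {A B : Set X}, hausdorffEDist A B ≠ ⊤ →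
      coarseStabilizer G A ≤ coarseStabilizer G B := fun {A B} hAB g hg => by
    have hBA : hausdorffEDist B A ≠ ⊤ := by rwa [hausdorffEDist_comm]
    exact hausdorffEDist_ne_top_trans hBA
      (hausdorffEDist_ne_top_trans hg (by rwa [hausdorffEDist_smul]))
  exact le_antisymm (key h) (key (by rwa [hausdorffEDist_comm]))

theorem conj_mem_coarseStabilizer {Y : Set X} {g : G} (hg : g ∈ coarseStabilizer G Y) (a : G) :
    a * g * a⁻¹ ∈ coarseStabilizer G (a • Y) := by
  show hausdorffEDist (a • Y) ((a * g * a⁻¹) • a • Y) ≠ ⊤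
  rwa [smul_smul, inv_mul_cancel_right, mul_smul, hausdorffEDist_smul]

theorem conj_mem_coarseStabilizer_cyclicOrbit {f g : G} {x : X}
    (hg : g ∈ coarseStabilizer G (cyclicOrbit f x)) (a : G) :
    a * g * a⁻¹ ∈ coarseStabilizer G (cyclicOrbit (a * f * a⁻¹) x) := by
  rw [coarseStabilizer_congr (hausdorffEDist_cyclicOrbit_ne_top _ x (a • x)), cyclicOrbit_conj]
  exact conj_mem_coarseStabilizer hg a

theorem powerCentralizer_le_coarseStabilizer (f : G) (x : X) :
    powerCentralizer f ≤ coarseStabilizer G (cyclicOrbit f x) := by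
  rintro g ⟨m, hm, hc⟩
  rw [coarseStabilizer_congr (hausdorffEDist_cyclicOrbit_pow_ne_top f x hm)]
  show hausdorffEDist _ (g • _) ≠ ⊤
  rw [smul_cyclicOrbit_of_commute hc]
  exact hausdorffEDist_cyclicOrbit_ne_top _ _ _

theorem IsContractingElement.exists_forall_infDist_le [ProperSpace X] (hgeo : GeodesicSpace X)
    {o : X} {f : G} (hf : IsContractingElement o f) :
    ∃ τ, ∀ k ∈ coarseStabilizer G (cyclicOrbit f o), infDist (k • o) (cyclicOrbit f o) ≤ τ := by
  obtain ⟨⟨C, hC, hcon⟩, K, c, hK, -, hqi⟩ := hf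
  refine ⟨6 * C + 1 + K * (K * (6 * C + 3 + c)) + c, fun k hk => ?_⟩
  -- `k • ⟨f⟩ • o` is a contracting quasi-line at finite Hausdorff distance from `⟨f⟩ • o`
  have hz : range (fun i : ℤ => k • f ^ i • o) = k • cyclicOrbit f o := (smul_set_range ..).symm
  change hausdorffEDist _ (k • _) ≠ ⊤ at hk
  rw [hausdorffEDist_comm] at hk
  simpa using hcon.infDist_le_of_quasiLine hgeo hC (cyclicOrbit_nonempty f o) (by linarith)
    (z := fun i : ℤ => k • f ^ i • o) (by simpa only [dist_smul] using fun i j => (hqi i j).1)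
    (by simpa only [dist_smul] using fun i j => (hqi i j).2) (hz ▸ hcon.smul k)
    (fun i => infDist_le_hausdorffDist_of_mem (hz ▸ mem_range_self i) hk) 0

theorem finite_coarseStabilizer_inf_of_weaklyIndependent [ProperSpace X]
    (hgeo : GeodesicSpace X) {o : X} (hproper : ∀ r : ℝ, {g : G | dist o (g • o) ≤ r}.Finite)
    {g h : G} (hg : IsContractingElement o g) (hh : IsContractingElement o h)
    (hgh : WeaklyIndependent o g h) :
    ((coarseStabilizer G (cyclicOrbit g o) ⊓ coarseStabilizer G (cyclicOrbit h o) : Subgroup G) :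
      Set G).Finite := by
  obtain ⟨τg, hτg⟩ := hg.exists_forall_infDist_le hgeo
  obtain ⟨τh, hτh⟩ := hh.exists_forall_infDist_le hgeo
  obtain ⟨R, hR⟩ := hgh
  set τ := max (max τg τh) 0
  have hτ : 0 ≤ τ := le_max_right _ _
  have ho : ∀ f : G, infDist o (cyclicOrbit f o) = 0 := fun f =>
    infDist_zero_of_mem ⟨0, by simp⟩
  refine (hproper (R τ)).subset fun k hk => ?_
  obtain ⟨hkg, hkh⟩ := Subgroup.mem_inf.1 hk
  exact hR τ hτ o ⟨(ho g).trans_le hτ, (ho h).trans_le hτ⟩ (k • o)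
    ⟨(hτg k hkg).trans ((le_max_left _ _).trans (le_max_left _ _)),
      (hτh k hkh).trans ((le_max_right _ _).trans (le_max_left _ _))⟩

end Group

end

/-- existence of the elliptic radical: a unique maximal finite normal
subgroup `E(G)`, which equals `⋂_f E(f)` and also `⋂_f E⁺(f)` over all contracting
elements `f`. -/
theorem elliptic_radical {G X : Type*} [Group G]
    [MetricSpace X] [ProperSpace X] [MulAction G X]
    (hiso : ∀ g : G, Isometry fun x : X => g • x)
    (hgeo : GeodesicSpace X) (o : X)
    (hproper : ∀ (x : X) (r : ℝ), {g : G | dist x (g • x) ≤ r}.Finite)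
    (hcp : ContractingProperty G X o) :
    ∃ E : Subgroup G, E.Normal ∧ (E : Set G).Finite ∧
      (∀ N : Subgroup G, N.Normal → (N : Set G).Finite → N ≤ E) ∧
      (∀ E' : Subgroup G, E'.Normal → (E' : Set G).Finite →
        (∀ N : Subgroup G, N.Normal → (N : Set G).Finite → N ≤ E') → E' = E) ∧
      ((E : Set G) = ⋂ f ∈ {f : G | IsContractingElement o f},
        {g : G | EMetric.hausdorffEdist (cyclicOrbit f o)
          ((fun x : X => g • x) '' cyclicOrbit f o) ≠ ⊤}) ∧
      ((E : Set G) = ⋂ f ∈ {f : G | IsContractingElement o f},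
        {g : G | ∃ m : ℕ, 0 < m ∧ g * f ^ m * g⁻¹ = f ^ m}) := by
  have : IsIsometricSMul G X := ⟨hiso⟩
  obtain ⟨g₀, h₀, hg₀, hh₀, hind⟩ := hcp
  set S := {f : G | IsContractingElement o f}
  have hS : ∀ f ∈ S, ∀ a : G, a * f * a⁻¹ ∈ S := fun f hf a => hf.conj hgeo a
  set Eplus := ⨅ f ∈ S, powerCentralizer f
  set E := ⨅ f ∈ S, coarseStabilizer G (cyclicOrbit f o)
  have hE_normal : E.Normal := Subgroup.normal_iInf_of_conj_mem _ hS
    fun _ _ a hg => conj_mem_coarseStabilizer_cyclicOrbit hg a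
  have hE_finite : (E : Set G).Finite :=
    (finite_coarseStabilizer_inf_of_weaklyIndependent hgeo (hproper o) hg₀ hh₀ hind).subset
      (SetLike.coe_subset_coe.2 (le_inf (iInf₂_le g₀ hg₀) (iInf₂_le h₀ hh₀)))
  have hmax : ∀ N : Subgroup G, N.Normal → (N : Set G).Finite → N ≤ Eplus :=
    fun N hN hfin => le_iInf₂ fun f _ => hN.le_powerCentralizer hfin f
  have hEq : Eplus = E := le_antisymm
    (iInf₂_mono fun f _ => powerCentralizer_le_coarseStabilizer f o) (hmax E hE_normal hE_finite)
  rw [← hEq] at hE_normal hE_finite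
  refine ⟨Eplus, hE_normal, hE_finite, hmax, fun E' hn hfin hmax' =>
    le_antisymm (hmax E' hn hfin) (hmax' _ hE_normal hE_finite), ?_, ?_⟩
  · rw [hEq]
    ext g
    simp only [E, Subgroup.coe_iInf, Set.mem_iInter]
    rfl
  · ext g
    simp only [Eplus, Subgroup.coe_iInf, Set.mem_iInter, SetLike.mem_coe, mem_powerCentralizer_iff]
    rfl
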